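/- For every real λ with 0 < λ < 1, the series ∑_{n=1}^∞ Var_n·λ^n converges and equals (λ/(1−λ)²) · ∫_D Re[(1+λz)/(1−λz)] ν(dz). -/

import Mathlib

/-! For `‖z‖ ≤ 1` the integrand of `Var_n` is `Re (2 ∑_{k<n} (n-k) z^k - n)`. Its generating
function is read off from the Cauchy product of `∑ m λ^m = λ/(1-λ)²` with `∑ (λz)^k = 1/(1-λz)`:
it equals `λ/(1-λ)² · Re (2/(1-λz) - 1) = λ/(1-λ)² · Re ((1+λz)/(1-λz))`. The integrand is
dominated by its value at `z = 1`, so dominated convergence moves the sum inside the integral. -/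

open MeasureTheory Filter Topology Set

/-- The variance sequence `Var_n = ∫_D (n + 2 ∑_{k=1}^{n-1} (n-k) Re(z^k)) ν(dz)`. -/
noncomputable def VarSeq (ν : Measure ℂ) (n : ℕ) : ℝ :=
  ∫ z, ((n : ℝ) + 2 * ∑ k ∈ Finset.Ico 1 n, ((n : ℝ) - (k : ℝ)) * (z ^ k).re) ∂ν

noncomputable def varIntegrand (n : ℕ) (z : ℂ) : ℝ :=
  (n : ℝ) + 2 * ∑ k ∈ Finset.Ico 1 n, ((n : ℝ) - (k : ℝ)) * (z ^ k).re

theorem VarSeq_eq_integral (ν : Measure ℂ) (n : ℕ) :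
    VarSeq ν n = ∫ z, varIntegrand n z ∂ν := rfl

theorem continuous_varIntegrand (n : ℕ) : Continuous (varIntegrand n) := by
  unfold varIntegrand; fun_prop

theorem varIntegrand_eq_re (n : ℕ) (z : ℂ) :
    varIntegrand n z = (2 * ∑ k ∈ Finset.range n, ((n : ℂ) - k) * z ^ k - n).re := by
  rcases Nat.eq_zero_or_pos n with rfl | hn
  · simp [varIntegrand]
  rw [Finset.sum_range_eq_add_Ico _ hn, varIntegrand]
  simp [Complex.re_sum]
  ring

theorem abs_varIntegrand_le {z : ℂ} (hz : ‖z‖ ≤ 1) (n : ℕ) :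
    |varIntegrand n z| ≤ varIntegrand n 1 := by
  have hterm : ∀ k ∈ Finset.Ico 1 n,
      |((n : ℝ) - k) * (z ^ k).re| ≤ ((n : ℝ) - k) * (1 ^ k : ℂ).re := by
    intro k hk
    have hkn : (k : ℝ) ≤ n := by exact_mod_cast (Finset.mem_Ico.1 hk).2.le
    rw [abs_mul, abs_of_nonneg (sub_nonneg.2 hkn), one_pow, Complex.one_re, mul_one]
    refine mul_le_of_le_one_right (sub_nonneg.2 hkn) ?_
    calc |(z ^ k).re| ≤ ‖z ^ k‖ := Complex.abs_re_le_norm _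
      _ = ‖z‖ ^ k := norm_pow _ _
      _ ≤ 1 := pow_le_one₀ (norm_nonneg z) hz
  calc |varIntegrand n z|
      ≤ |(n : ℝ)| + 2 * |∑ k ∈ Finset.Ico 1 n, ((n : ℝ) - k) * (z ^ k).re| := by
        rw [varIntegrand]; exact (abs_add_le _ _).trans_eq (by rw [abs_mul, abs_two])
    _ ≤ (n : ℝ) + 2 * ∑ k ∈ Finset.Ico 1 n, ((n : ℝ) - k) * (1 ^ k : ℂ).re := by
        rw [Nat.abs_cast]
        gcongr
        exact (Finset.abs_sum_le_sum_abs _ _).trans (Finset.sum_le_sum hterm)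
    _ = varIntegrand n 1 := rfl

theorem hasSum_pow_mul_sum_range_sub_mul_pow {x z : ℂ} (hx : ‖x‖ < 1) (hxz : ‖x * z‖ < 1) :
    HasSum (fun n : ℕ => x ^ n * ∑ k ∈ Finset.range n, ((n : ℂ) - k) * z ^ k)
      ((1 - x * z)⁻¹ * (x / (1 - x) ^ 2)) := by
  have hgeom : HasSum (fun k : ℕ => (x * z) ^ k) (1 - x * z)⁻¹ :=
    hasSum_geometric_of_norm_lt_one hxz
  have harith : HasSum (fun m : ℕ => (m : ℂ) * x ^ m) (x / (1 - x) ^ 2) :=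
    hasSum_coe_mul_geometric_of_norm_lt_one hx
  have harith_norm : Summable fun m : ℕ => ‖(m : ℂ) * x ^ m‖ := by
    simpa using (hasSum_coe_mul_geometric_of_norm_lt_one (r := ‖x‖) (by rwa [norm_norm])).summable
  have hgeom_norm : Summable fun k : ℕ => ‖(x * z) ^ k‖ := by
    simpa using summable_geometric_of_lt_one (norm_nonneg _) hxz
  have hcauchy := hasSum_sum_range_mul_of_summable_norm hgeom_norm harith_norm
  rw [hgeom.tsum_eq, harith.tsum_eq] at hcauchy
  refine hcauchy.congr_fun fun n => ?_
  rw [Finset.sum_range_succ, Nat.sub_self, Nat.cast_zero, zero_mul, mul_zero, add_zero,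
    Finset.mul_sum]
  refine Finset.sum_congr rfl fun k hk => ?_
  have hkn : k ≤ n := (Finset.mem_range.1 hk).le
  have hsplit : x ^ n = x ^ k * x ^ (n - k) := by rw [← pow_add, Nat.add_sub_cancel' hkn]
  rw [Nat.cast_sub hkn, mul_pow, hsplit]
  ring

theorem hasSum_pow_mul_two_mul_sum_range_sub {x z : ℂ} (hx : ‖x‖ < 1) (hxz : ‖x * z‖ < 1) :
    HasSum (fun n : ℕ => x ^ n * (2 * ∑ k ∈ Finset.range n, ((n : ℂ) - k) * z ^ k - n))
      (x / (1 - x) ^ 2 * ((1 + x * z) / (1 - x * z))) := by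
  have hxz₁ : 1 - x * z ≠ 0 := sub_ne_zero.2 fun h => by simp [← h] at hxz
  have hx₁ : 1 - x ≠ 0 := sub_ne_zero.2 fun h => by simp [← h] at hx
  have hvalue : x / (1 - x) ^ 2 * ((1 + x * z) / (1 - x * z))
      = 2 * ((1 - x * z)⁻¹ * (x / (1 - x) ^ 2)) - x / (1 - x) ^ 2 := by
    field_simp
    ring
  rw [hvalue]
  exact (((hasSum_pow_mul_sum_range_sub_mul_pow hx hxz).mul_left 2).sub
    (hasSum_coe_mul_geometric_of_norm_lt_one hx)).congr_fun fun n => by ring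

theorem hasSum_varIntegrand_mul_pow {l : ℝ} (hl : |l| < 1) {z : ℂ} (hz : ‖z‖ ≤ 1) :
    HasSum (fun n : ℕ => varIntegrand n z * l ^ n)
      (l / (1 - l) ^ 2 * ((1 + (l : ℂ) * z) / (1 - (l : ℂ) * z)).re) := by
  have hl' : ‖(l : ℂ)‖ < 1 := by rwa [Complex.norm_real, Real.norm_eq_abs]
  have hlz : ‖(l : ℂ) * z‖ < 1 := by
    rw [norm_mul]; exact (mul_le_of_le_one_right (norm_nonneg _) hz).trans_lt hl'
  convert Complex.reCLM.hasSum (hasSum_pow_mul_two_mul_sum_range_sub hl' hlz) using 1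
  · ext n
    rw [Complex.reCLM_apply, ← Complex.ofReal_pow, Complex.re_ofReal_mul, varIntegrand_eq_re,
      mul_comm]
  · rw [Complex.reCLM_apply, ← Complex.re_ofReal_mul]
    push_cast
    rfl

theorem norm_varIntegrand_mul_pow_le {l : ℝ} (hl : 0 ≤ l) {z : ℂ} (hz : ‖z‖ ≤ 1) (n : ℕ) :
    ‖varIntegrand n z * l ^ n‖ ≤ varIntegrand n 1 * l ^ n := by
  rw [norm_mul, norm_pow, Real.norm_eq_abs, Real.norm_of_nonneg hl]
  exact mul_le_mul_of_nonneg_right (abs_varIntegrand_le hz n) (by positivity)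

theorem variance_generating_function_general
    (ν : Measure ℂ) [IsFiniteMeasure ν]
    (hsupp : ν {z : ℂ | ¬ ‖z‖ ≤ 1} = 0)
    (l : ℝ) (hl0 : 0 < l) (hl1 : l < 1) :
    HasSum (fun n : ℕ => VarSeq ν (n + 1) * l ^ (n + 1))
      (l / (1 - l) ^ 2 *
        ∫ z, ((1 + (l : ℂ) * z) / (1 - (l : ℂ) * z)).re ∂ν) := by
  have hl : |l| < 1 := abs_lt.2 ⟨by linarith, hl1⟩
  have hdisk : ∀ᵐ z ∂ν, ‖z‖ ≤ 1 := ae_iff.2 hsupp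
  have hsum := hasSum_integral_of_dominated_convergence
    (F := fun n z => varIntegrand n z * l ^ n) (fun n _ => varIntegrand n 1 * l ^ n)
    (fun n => ((continuous_varIntegrand n).mul continuous_const).aestronglyMeasurable)
    (fun n => hdisk.mono fun z hz => norm_varIntegrand_mul_pow_le hl0.le hz n)
    (Eventually.of_forall fun _ => (hasSum_varIntegrand_mul_pow hl norm_one.le).summable)
    (integrable_const _) (hdisk.mono fun z hz => hasSum_varIntegrand_mul_pow hl hz)
  simp only [integral_mul_const, integral_const_mul, ← VarSeq_eq_integral] at hsum
  have hVar_zero : VarSeq ν 0 = 0 := by simp [VarSeq]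
  simpa [hVar_zero] using (hasSum_nat_add_iff' 1).2 hsum

/-- **Generating-function identity (remark (5) after Theorem 2.5).**
For a finite conjugation-invariant measure `ν` on the closed unit disk and
`0 < λ < 1`, the series `∑_{n≥1} Var_n λⁿ` converges with sum
`(λ/(1-λ)²) ∫_D Re[(1+λz)/(1-λz)] ν(dz)`. -/
theorem variance_generating_function
    (ν : Measure ℂ) [IsFiniteMeasure ν]
    (hsupp : ν {z : ℂ | ¬ ‖z‖ ≤ 1} = 0)
    (hconj : ∀ A : Set ℂ, MeasurableSet A → ν ((starRingEnd ℂ) ⁻¹' A) = ν A)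
    (l : ℝ) (hl0 : 0 < l) (hl1 : l < 1) :
    HasSum (fun n : ℕ => VarSeq ν (n + 1) * l ^ (n + 1))
      (l / (1 - l) ^ 2 *
        ∫ z, ((1 + (l : ℂ) * z) / (1 - (l : ℂ) * z)).re ∂ν) :=
  variance_generating_function_general ν hsupp l hl0 hl1
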